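/- For n ≥ 8, the 2-coloured flip graph of a convex (n+2)-gon contains a connected component that is not a planar graph. -/

import Mathlib

namespace PolyFlip


/-- Two vertices of the convex `N`-gon are consecutive along the boundary. -/
def BdryAdj (N : ℕ) (i j : Fin N) : Prop :=
  (i.val + 1) % N = j.val ∨ (j.val + 1) % N = i.val

/-- `d` is a diagonal of the convex `N`-gon: an unordered pair of distinct,
non-consecutive vertices. -/
def IsDiag (N : ℕ) (d : Finset (Fin N)) : Prop :=
  ∃ i j : Fin N, i ≠ j ∧ ¬ BdryAdj N i j ∧ d = {i, j}

/-- The chord `d` crosses the chord `e` (in this orientation): the endpoints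
interlace in the cyclic (here: linear) order of the polygon's vertices. -/
def Crosses {N : ℕ} (d e : Finset (Fin N)) : Prop :=
  ∃ a b c f : Fin N, d = {a, b} ∧ e = {c, f} ∧ a < c ∧ c < b ∧ b < f

/-- A triangulation of the convex `N`-gon: a maximal set of pairwise
non-crossing diagonals. -/
structure Triangulation (N : ℕ) where
  diags : Finset (Finset (Fin N))
  isDiag : ∀ d ∈ diags, IsDiag N d
  noncross : ∀ d ∈ diags, ∀ e ∈ diags, ¬ Crosses d e
  maximal : ∀ d, IsDiag N d → (∀ e ∈ diags, ¬ Crosses d e ∧ ¬ Crosses e d) → d ∈ diags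

/-- `a` and `b` are joined by an edge of the triangulated polygon:
either a boundary edge, or a diagonal of the triangulation. -/
def IsEdge {N : ℕ} (T : Triangulation N) (a b : Fin N) : Prop :=
  a ≠ b ∧ (BdryAdj N a b ∨ ({a, b} : Finset (Fin N)) ∈ T.diags)

/-- `t` is a triangle (face) of the triangulation `T`. -/
def IsTriangle {N : ℕ} (T : Triangulation N) (t : Finset (Fin N)) : Prop :=
  ∃ a b c : Fin N, a ≠ b ∧ a ≠ c ∧ b ≠ c ∧ t = {a, b, c} ∧
    IsEdge T a b ∧ IsEdge T a c ∧ IsEdge T b c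

/-- A coloured triangulation: a triangulation together with a colour in
`Fin m` for each of its triangles. -/
structure ColouredTri (N m : ℕ) where
  T : Triangulation N
  col : {t : Finset (Fin N) // IsTriangle T t} → Fin m

/-- The degree of a vertex `x` in the triangulated polygon. -/
noncomputable def degree {N : ℕ} (T : Triangulation N) (x : Fin N) : ℕ :=
  Nat.card {y : Fin N // IsEdge T x y}

/-- The `σ`-flip at the diagonal `d`: `d = {a,b}` is a diagonal of `C` whose two
incident triangles `{a,b,x}` and `{a,b,y}` have the same colour `i`; it is replaced by
the other diagonal `{x,y}` of the quadrilateral, the two new triangles `{a,x,y}` and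
`{b,x,y}` get colour `σ i`, and all other triangles keep their colours. -/
def SFlipAt {N m : ℕ} (σ : Equiv.Perm (Fin m)) (d : Finset (Fin N))
    (C C' : ColouredTri N m) : Prop :=
  ∃ (a b x y : Fin N) (h₁ : IsTriangle C.T {a, b, x}) (h₂ : IsTriangle C.T {a, b, y})
    (h₁' : IsTriangle C'.T {a, x, y}) (h₂' : IsTriangle C'.T {b, x, y}),
    d = {a, b} ∧ d ∈ C.T.diags ∧ x ≠ y ∧
    C.col ⟨{a, b, x}, h₁⟩ = C.col ⟨{a, b, y}, h₂⟩ ∧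
    C'.T.diags = insert {x, y} (C.T.diags.erase d) ∧
    C'.col ⟨{a, x, y}, h₁'⟩ = σ (C.col ⟨{a, b, x}, h₁⟩) ∧
    C'.col ⟨{b, x, y}, h₂'⟩ = σ (C.col ⟨{a, b, x}, h₁⟩) ∧
    ∀ (t : Finset (Fin N)) (ht : IsTriangle C.T t) (ht' : IsTriangle C'.T t),
      t ≠ {a, b, x} → t ≠ {a, b, y} → C'.col ⟨t, ht'⟩ = C.col ⟨t, ht⟩

/-- The `σ`-flip relation. -/
def SFlip {N m : ℕ} (σ : Equiv.Perm (Fin m)) (C C' : ColouredTri N m) : Prop :=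
  ∃ d, SFlipAt σ d C C'

/-- The 2-coloured flip at a diagonal (the colour permutation swaps the two colours). -/
abbrev Flip2At {N : ℕ} (d : Finset (Fin N)) (C C' : ColouredTri N 2) : Prop :=
  SFlipAt (finRotate 2) d C C'

/-- The 2-coloured flip relation. -/
abbrev Flip2 {N : ℕ} (C C' : ColouredTri N 2) : Prop :=
  SFlip (finRotate 2) C C'

/-- The 2-coloured flip graph of the convex `N`-gon: vertices are the 2-coloured
triangulations, edges are single 2-coloured flips. -/
def flipGraph (N : ℕ) : SimpleGraph (ColouredTri N 2) where
  Adj C C' := C ≠ C' ∧ (Flip2 C C' ∨ Flip2 C' C)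
  symm := ⟨fun C C' h => ⟨h.1.symm, h.2.symm⟩⟩
  loopless := ⟨fun C h => h.1 rfl⟩

/-- The sign (`+1` for colour `0`, `-1` for colour `1`) of a colour, in `ZMod 3`. -/
def signVal (c : Fin 2) : ZMod 3 := if c = 0 then 1 else -1

/-- The weight of a vertex `x`: the sum, modulo 3, of the signs of all triangles
incident with `x`. -/
noncomputable def weight {N : ℕ} (C : ColouredTri N 2) (x : Fin N) : ZMod 3 :=
  ∑ᶠ t : {t : Finset (Fin N) // IsTriangle C.T t},
    if x ∈ t.val then signVal (C.col t) else 0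

/-- The number of triangles coloured `+1` (colour `0`). -/
noncomputable def plusCount {N : ℕ} (C : ColouredTri N 2) : ℕ :=
  Nat.card {t : {t : Finset (Fin N) // IsTriangle C.T t} // C.col t = 0}

/-- Adjacency in the `k`-dimensional hypercube: the two vertices differ in
exactly one coordinate. -/
def cubeAdj (k : ℕ) (u v : Fin k → Bool) : Prop := ∃! i, u i ≠ v i

/-- The `k`-dimensional hypercube graph on `{0,1}^k`. -/
def cubeGraph (k : ℕ) : SimpleGraph (Fin k → Bool) where
  Adj := cubeAdj k
  symm := by
    constructor
    rintro u v ⟨i, hi, hu⟩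
    exact ⟨i, hi.symm, fun j hj => hu j hj.symm⟩
  loopless := by
    constructor
    rintro u ⟨i, hi, -⟩
    exact hi rfl

/-- `f` exhibits a `k`-dimensional hypercube inside the connected component of `C`
in the 2-coloured flip graph. -/
def CubeEmb {N : ℕ} (C : ColouredTri N 2) (k : ℕ)
    (f : (Fin k → Bool) → ColouredTri N 2) : Prop :=
  Function.Injective f ∧
  (∀ u v, cubeAdj k u v → (flipGraph N).Adj (f u) (f v)) ∧
  ∀ u, (flipGraph N).Reachable C (f u)

/-- `G` contains a subdivision (topological copy) of `H`: there are branch vertices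
`f w` for the vertices `w` of `H` and internally disjoint paths in `G` between them
realising the edges of `H`. -/
def ContainsSubdivision {V W : Type*} (G : SimpleGraph V) (H : SimpleGraph W) : Prop :=
  ∃ f : W → V, Function.Injective f ∧
    ∃ P : ∀ u v : W, H.Adj u v → G.Walk (f u) (f v),
      (∀ u v (h : H.Adj u v), (P u v h).IsPath) ∧
      (∀ u v (h : H.Adj u v) (w : W), f w ∈ (P u v h).support → w = u ∨ w = v) ∧
      (∀ u₁ v₁ (h₁ : H.Adj u₁ v₁) u₂ v₂ (h₂ : H.Adj u₂ v₂),
        (s(u₁, v₁) : Sym2 W) ≠ s(u₂, v₂) →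
        ∀ x, x ∈ (P u₁ v₁ h₁).support → x ∈ (P u₂ v₂ h₂).support →
          (x = f u₁ ∨ x = f v₁) ∧ (x = f u₂ ∨ x = f v₂))

/-- Planarity, via Kuratowski's characterisation: a graph is planar iff it contains
no subdivision of `K₅` and no subdivision of `K₃,₃`. -/
def IsPlanar {V : Type*} (G : SimpleGraph V) : Prop :=
  ¬ ContainsSubdivision G (SimpleGraph.completeGraph (Fin 5)) ∧
  ¬ ContainsSubdivision G (completeBipartiteGraph (Fin 3) (Fin 3))

/-!
The uni-coloured fan triangulation of the `(n+2)`-gon from vertex `0` contains the four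
quadrilaterals `Q k = {0, 2k+1, 2k+2, 2k+3}` (`k < 4`, which needs `2·3 + 3 ≤ n + 1`), any two of
which share only the vertex `0`. For `u ∈ {0,1}⁴` let `T u` be the fan in which the spoke
`{0, 2k+2}` of `Q k` is replaced by the chord `{2k+1, 2k+3}` whenever `u k = 1`, and colour a
triangle `1` exactly when it contains such a chord. Flipping `Q k` is then a 2-coloured flip from
`T u` to `T (u + e_k)`, so `u ↦ T u` embeds the hypercube `Q₄` into the component of the
uni-coloured fan; and `Q₄` contains a subdivision of `K₃,₃`.
-/

section Polygon

variable {N : ℕ}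

theorem pair_eq_pair_of_lt {α : Type*} [LinearOrder α] {a b p q : α} (hab : a < b) (hpq : p < q)
    (h : ({a, b} : Finset α) = {p, q}) : a = p ∧ b = q := by
  have ha : a ∈ ({p, q} : Finset α) := h ▸ by simp
  have hb : b ∈ ({p, q} : Finset α) := h ▸ by simp
  simp only [Finset.mem_insert, Finset.mem_singleton] at ha hb
  rcases ha with rfl | rfl <;> rcases hb with rfl | rfl <;> simp_all [lt_asymm]

theorem crosses_pair_iff {p q r s : Fin N} (hpq : p < q) (hrs : r < s) :
    Crosses ({p, q} : Finset (Fin N)) {r, s} ↔ p < r ∧ r < q ∧ q < s := by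
  constructor
  · rintro ⟨a, b, c, f, hd, he, hac, hcb, hbf⟩
    obtain ⟨rfl, rfl⟩ := pair_eq_pair_of_lt (hac.trans hcb) hpq hd.symm
    obtain ⟨rfl, rfl⟩ := pair_eq_pair_of_lt (hcb.trans hbf) hrs he.symm
    exact ⟨hac, hcb, hbf⟩
  · rintro ⟨hpr, hrq, hqs⟩
    exact ⟨p, q, r, s, rfl, rfl, hpr, hrq, hqs⟩

theorem bdryAdj_comm {i j : Fin N} : BdryAdj N i j ↔ BdryAdj N j i := Or.comm

theorem bdryAdj_iff_of_lt {i j : Fin N} (hij : i < j) :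
    BdryAdj N i j ↔ j.val = i.val + 1 ∨ (i.val = 0 ∧ j.val + 1 = N) := by
  have hj := j.isLt
  rw [Fin.lt_def] at hij
  rw [BdryAdj, Nat.mod_eq_of_lt (by omega : i.val + 1 < N)]
  rcases Nat.lt_or_ge (j.val + 1) N with h | h
  · rw [Nat.mod_eq_of_lt h]; omega
  · rw [show j.val + 1 = N by omega, Nat.mod_self]; omega

theorem IsEdge.symm {T : Triangulation N} {a b : Fin N} (h : IsEdge T a b) : IsEdge T b a := by
  obtain ⟨hne, h⟩ := h
  rw [bdryAdj_comm, Finset.pair_comm] at h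
  exact ⟨hne.symm, h⟩

theorem isEdge_iff_of_lt {T : Triangulation N} {a b : Fin N} (hab : a < b) :
    IsEdge T a b ↔ b.val = a.val + 1 ∨ (a.val = 0 ∧ b.val + 1 = N) ∨
      ({a, b} : Finset (Fin N)) ∈ T.diags := by
  rw [IsEdge, bdryAdj_iff_of_lt hab, or_assoc]
  exact and_iff_right hab.ne

theorem isTriangle_of_isEdge {T : Triangulation N} {a b c : Fin N} (hab : IsEdge T a b)
    (hac : IsEdge T a c) (hbc : IsEdge T b c) : IsTriangle T {a, b, c} :=
  ⟨a, b, c, hab.1, hac.1, hbc.1, rfl, hab, hac, hbc⟩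

theorem IsTriangle.isEdge {T : Triangulation N} {t : Finset (Fin N)} (ht : IsTriangle T t)
    {x y : Fin N} (hx : x ∈ t) (hy : y ∈ t) (hxy : x ≠ y) : IsEdge T x y := by
  obtain ⟨a, b, c, -, -, -, rfl, hab, hac, hbc⟩ := ht
  simp only [Finset.mem_insert, Finset.mem_singleton] at hx hy
  rcases hx with rfl | rfl | rfl <;> rcases hy with rfl | rfl | rfl <;>
    first | exact absurd rfl hxy | assumption | exact hab.symm | exact hac.symm | exact hbc.symm

end Polygon

section Fan

variable {n : ℕ} {u : Fin 4 → Bool}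

def RemovedSpoke (u : Fin 4 → Bool) (j : ℕ) : Prop :=
  ∃ k : Fin 4, u k = true ∧ j = 2 * k + 2

def IsChord (u : Fin 4 → Bool) (i j : ℕ) : Prop :=
  ∃ k : Fin 4, u k = true ∧ i = 2 * k + 1 ∧ j = 2 * k + 3

def IsFanDiag (n : ℕ) (u : Fin 4 → Bool) (i j : ℕ) : Prop :=
  (i = 0 ∧ 2 ≤ j ∧ j ≤ n ∧ ¬ RemovedSpoke u j) ∨ IsChord u i j

theorem not_removedSpoke_of_odd {j : ℕ} (hj : j % 2 = 1) : ¬ RemovedSpoke u j := by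
  rintro ⟨k, -, rfl⟩
  omega

theorem removedSpoke_update {k : Fin 4} {j : ℕ} :
    RemovedSpoke (Function.update u k true) j ↔ RemovedSpoke u j ∨ j = 2 * k + 2 := by
  constructor
  · rintro ⟨l, hl, rfl⟩
    rcases eq_or_ne l k with rfl | hlk
    · exact Or.inr rfl
    · exact Or.inl ⟨l, by rwa [Function.update_of_ne hlk] at hl, rfl⟩
  · rintro (⟨l, hl, rfl⟩ | rfl)
    · rcases eq_or_ne l k with rfl | hlk
      · exact ⟨l, by simp, rfl⟩
      · exact ⟨l, by rwa [Function.update_of_ne hlk], rfl⟩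
    · exact ⟨k, by simp, rfl⟩

theorem isChord_update {k : Fin 4} {i j : ℕ} :
    IsChord (Function.update u k true) i j ↔
      IsChord u i j ∨ (i = 2 * k + 1 ∧ j = 2 * k + 3) := by
  constructor
  · rintro ⟨l, hl, rfl, rfl⟩
    rcases eq_or_ne l k with rfl | hlk
    · exact Or.inr ⟨rfl, rfl⟩
    · exact Or.inl ⟨l, by rwa [Function.update_of_ne hlk] at hl, rfl, rfl⟩
  · rintro (⟨l, hl, rfl, rfl⟩ | ⟨rfl, rfl⟩)
    · rcases eq_or_ne l k with rfl | hlk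
      · exact ⟨l, by simp, rfl, rfl⟩
      · exact ⟨l, by rwa [Function.update_of_ne hlk], rfl, rfl⟩
    · exact ⟨k, by simp, rfl, rfl⟩

theorem isFanDiag_update {k : Fin 4} {i j : ℕ} :
    IsFanDiag n (Function.update u k true) i j ↔
      (i = 2 * k + 1 ∧ j = 2 * k + 3) ∨
        (¬ (i = 0 ∧ j = 2 * k + 2) ∧ IsFanDiag n u i j) := by
  have hchord : IsChord u i j → i ≠ 0 := by
    rintro ⟨l, -, rfl, -⟩
    omega
  simp only [IsFanDiag, removedSpoke_update, isChord_update, not_or]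
  constructor
  · rintro (⟨hi, h2, hn, hr, hj⟩ | hc | hc)
    · exact Or.inr ⟨fun h => hj h.2, Or.inl ⟨hi, h2, hn, hr⟩⟩
    · exact Or.inr ⟨fun h => hchord hc h.1, Or.inr hc⟩
    · exact Or.inl hc
  · rintro (hc | ⟨hne, ⟨hi, h2, hn, hr⟩ | hc⟩)
    · exact Or.inr (Or.inr hc)
    · exact Or.inl ⟨hi, h2, hn, hr, fun hj => hne ⟨hi, hj⟩⟩
    · exact Or.inr (Or.inl hc)

theorem isFanDiag_chord_iff (k : Fin 4) : IsFanDiag n u (2 * k + 1) (2 * k + 3) ↔ u k = true := by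
  constructor
  · rintro (⟨h, -⟩ | ⟨l, hl, h, -⟩)
    · omega
    · rwa [show k = l from Fin.ext (by omega)]
  · exact fun h => Or.inr ⟨k, h, rfl, rfl⟩

theorem IsFanDiag.bounds (hn : 8 ≤ n) {i j : ℕ} (h : IsFanDiag n u i j) :
    i + 2 ≤ j ∧ j ≤ n + 1 ∧ ¬ (i = 0 ∧ j = n + 1) := by
  rcases h with ⟨rfl, h2, hjn, -⟩ | ⟨k, -, rfl, rfl⟩
  · omega
  · have := k.isLt
    omega

theorem IsFanDiag.not_interlace {a b c d : ℕ} (hab : IsFanDiag n u a b)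
    (hcd : IsFanDiag n u c d) : ¬ (a < c ∧ c < b ∧ b < d) := by
  rintro ⟨hac, hcb, hbd⟩
  rcases hab with ⟨rfl, -, -, hb⟩ | ⟨k, -, rfl, rfl⟩ <;>
    rcases hcd with ⟨rfl, -, -, -⟩ | ⟨l, hl, rfl, rfl⟩
  · omega
  · exact hb ⟨l, hl, by omega⟩
  · omega
  · omega

theorem isFanDiag_of_forall_not_interlace {i j : ℕ} (hij : i + 2 ≤ j)
    (hj : j ≤ n + 1) (hwrap : ¬ (i = 0 ∧ j = n + 1))
    (h : ∀ c d, IsFanDiag n u c d →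
      ¬ (i < c ∧ c < j ∧ j < d) ∧ ¬ (c < i ∧ i < d ∧ d < j)) :
    IsFanDiag n u i j := by
  rcases Nat.eq_zero_or_pos i with rfl | hi
  · by_cases hr : RemovedSpoke u j
    · obtain ⟨k, hk, rfl⟩ := hr
      exact absurd ⟨by omega, by omega, by omega⟩ (h _ _ (Or.inr ⟨k, hk, rfl, rfl⟩)).1
    · exact Or.inl ⟨rfl, hij, by omega, hr⟩
  · by_cases hr : RemovedSpoke u (i + 1)
    · obtain ⟨k, hk, hik⟩ := hr
      rcases eq_or_ne j (2 * k + 3) with rfl | hjk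
      · exact Or.inr ⟨k, hk, by omega, rfl⟩
      · have hspoke : IsFanDiag n u 0 (i + 2) :=
          Or.inl ⟨rfl, by omega, by omega, not_removedSpoke_of_odd (by omega)⟩
        exact absurd ⟨by omega, by omega, by omega⟩ (h _ _ hspoke).2
    · have hspoke : IsFanDiag n u 0 (i + 1) := Or.inl ⟨rfl, by omega, by omega, hr⟩
      exact absurd ⟨by omega, by omega, by omega⟩ (h _ _ hspoke).2

open Classical in
noncomputable def fanDiags (n : ℕ) (u : Fin 4 → Bool) : Finset (Finset (Fin (n + 2))) :=
  Finset.univ.filter fun d => ∃ a b : Fin (n + 2), a < b ∧ d = {a, b} ∧ IsFanDiag n u a b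

theorem mem_fanDiags {d : Finset (Fin (n + 2))} :
    d ∈ fanDiags n u ↔ ∃ a b : Fin (n + 2), a < b ∧ d = {a, b} ∧ IsFanDiag n u a b := by
  simp [fanDiags]

theorem pair_mem_fanDiags {a b : Fin (n + 2)} (hab : a < b) :
    {a, b} ∈ fanDiags n u ↔ IsFanDiag n u a b := by
  rw [mem_fanDiags]
  constructor
  · rintro ⟨c, d, hcd, h, hd⟩
    obtain ⟨rfl, rfl⟩ := pair_eq_pair_of_lt hab hcd h
    exact hd
  · exact fun h => ⟨a, b, hab, rfl, h⟩

theorem isDiag_of_mem_fanDiags (hn : 8 ≤ n) {d : Finset (Fin (n + 2))} (hd : d ∈ fanDiags n u) :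
    IsDiag (n + 2) d := by
  obtain ⟨a, b, hab, rfl, h⟩ := mem_fanDiags.1 hd
  have := h.bounds hn
  exact ⟨a, b, hab.ne, by rw [bdryAdj_iff_of_lt hab]; omega, rfl⟩

theorem not_crosses_of_mem_fanDiags {d e : Finset (Fin (n + 2))} (hd : d ∈ fanDiags n u)
    (he : e ∈ fanDiags n u) : ¬ Crosses d e := by
  obtain ⟨a, b, hab, rfl, h⟩ := mem_fanDiags.1 hd
  obtain ⟨c, f, hcf, rfl, h'⟩ := mem_fanDiags.1 he
  rw [crosses_pair_iff hab hcf]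
  exact h.not_interlace h'

theorem mem_fanDiags_of_not_crosses (hn : 8 ≤ n) {d : Finset (Fin (n + 2))}
    (hd : IsDiag (n + 2) d) (h : ∀ e ∈ fanDiags n u, ¬ Crosses d e ∧ ¬ Crosses e d) :
    d ∈ fanDiags n u := by
  obtain ⟨i, j, hne, hadj, rfl⟩ := hd
  wlog hij : i < j generalizing i j
  · rw [Finset.pair_comm] at h ⊢
    exact this j i hne.symm (bdryAdj_comm.not.1 hadj) h (lt_of_le_of_ne (not_lt.1 hij) hne.symm)
  rw [bdryAdj_iff_of_lt hij] at hadj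
  rw [pair_mem_fanDiags hij]
  refine isFanDiag_of_forall_not_interlace (by omega) (by omega) (by omega) fun c d hcd => ?_
  obtain ⟨hcd', hd, -⟩ := hcd.bounds hn
  have hlt : (⟨c, by omega⟩ : Fin (n + 2)) < ⟨d, by omega⟩ := Fin.mk_lt_mk.2 (by omega)
  have := h _ ((pair_mem_fanDiags hlt).2 hcd)
  rwa [crosses_pair_iff hij hlt, crosses_pair_iff hlt hij] at this

noncomputable def fanTriangulation (hn : 8 ≤ n) (u : Fin 4 → Bool) : Triangulation (n + 2) where
  diags := fanDiags n u
  isDiag _ := isDiag_of_mem_fanDiags hn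
  noncross _ hd _ he := not_crosses_of_mem_fanDiags hd he
  maximal _ hd h := mem_fanDiags_of_not_crosses hn hd h

theorem isEdge_fanTriangulation_iff (hn : 8 ≤ n) {a b : Fin (n + 2)} (hab : a < b) :
    IsEdge (fanTriangulation hn u) a b ↔
      b.val = a.val + 1 ∨ (a.val = 0 ∧ b.val = n + 1) ∨ IsFanDiag n u a b := by
  rw [isEdge_iff_of_lt hab]
  exact or_congr Iff.rfl (or_congr (and_congr Iff.rfl (by omega)) (pair_mem_fanDiags hab))

end Fan

section Cube

open SimpleGraph

instance (k : ℕ) : DecidableRel (cubeGraph k).Adj := fun u v => by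
  change Decidable (∃ i, u i ≠ v i ∧ ∀ j, u j ≠ v j → j = i)
  infer_instance

variable {k : ℕ}

theorem cubeGraph_adj_update {u : Fin k → Bool} {i : Fin k} {b : Bool} (h : u i ≠ b) :
    (cubeGraph k).Adj u (Function.update u i b) :=
  ⟨i, by simpa using h, fun j hj => by_contra fun hji => hj (by rw [Function.update_of_ne hji])⟩

theorem exists_update_of_cubeGraph_adj {u v : Fin k → Bool} (h : (cubeGraph k).Adj u v) :
    ∃ i, (u i = false ∧ v = Function.update u i true) ∨
      (v i = false ∧ u = Function.update v i true) := by
  obtain ⟨i, hi, huniq⟩ := h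
  have hv : ∀ j, j ≠ i → u j = v j := fun j hji => by_contra fun h => hji (huniq j h)
  refine ⟨i, ?_⟩
  cases hu : u i <;> cases hv' : v i <;> simp only [hu, hv', ne_eq, not_true_eq_false] at hi
  · refine Or.inl ⟨rfl, funext fun j => ?_⟩
    rcases eq_or_ne j i with rfl | hji
    · simpa using hv'
    · rw [Function.update_of_ne hji, hv j hji]
  · refine Or.inr ⟨rfl, funext fun j => ?_⟩
    rcases eq_or_ne j i with rfl | hji
    · simpa using hu
    · rw [Function.update_of_ne hji, hv j hji]

theorem cubeGraph_preconnected (k : ℕ) : (cubeGraph k).Preconnected := by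
  have hind : ∀ s : Finset (Fin k),
      (cubeGraph k).Reachable (fun _ => false) (fun i => decide (i ∈ s)) := by
    intro s
    induction s using Finset.induction_on with
    | empty => simp only [Finset.notMem_empty, decide_false]; rfl
    | insert a s ha ih =>
      have : (fun i => decide (i ∈ insert a s)) =
          Function.update (fun i => decide (i ∈ s)) a true := by
        funext i
        rcases eq_or_ne i a with rfl | hia
        · simp
        · simp [hia]
      rw [this]
      exact ih.trans (cubeGraph_adj_update (by simpa using ha)).reachable
  have hall : ∀ u, (cubeGraph k).Reachable (fun _ => false) u := fun u => by
    simpa using hind (Finset.univ.filter fun i => u i = true)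
  exact fun u v => (hall u).symm.trans (hall v)

end Cube

section Flip

variable {n : ℕ} {u : Fin 4 → Bool}

open Classical in
noncomputable def fanColour (u : Fin 4 → Bool) (t : Finset (Fin (n + 2))) : Fin 2 :=
  if ∃ x ∈ t, ∃ y ∈ t, IsChord u x y then 1 else 0

noncomputable def flippedFan (hn : 8 ≤ n) (u : Fin 4 → Bool) : ColouredTri (n + 2) 2 :=
  ⟨fanTriangulation hn u, fun t => fanColour u t.val⟩

theorem isEdge_zero_of_not_removedSpoke (hn : 8 ≤ n) {x : Fin (n + 2)} (hx : 1 ≤ x.val)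
    (hr : ¬ RemovedSpoke u x) :
    IsEdge (fanTriangulation hn u) 0 x := by
  have := x.isLt
  rw [isEdge_fanTriangulation_iff hn (Fin.lt_def.2 (by rw [Fin.val_zero]; omega)), Fin.val_zero]
  rcases Nat.lt_or_ge x.val 2 with h | h
  · exact Or.inl (by omega)
  · rcases Nat.lt_or_ge x.val (n + 1) with h' | h'
    · exact Or.inr (Or.inr (Or.inl ⟨rfl, h, by omega, hr⟩))
    · exact Or.inr (Or.inl ⟨rfl, by omega⟩)

theorem isEdge_of_val_eq_succ (hn : 8 ≤ n) {x y : Fin (n + 2)} (h : y.val = x.val + 1) :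
    IsEdge (fanTriangulation hn u) x y :=
  (isEdge_fanTriangulation_iff hn (Fin.lt_def.2 (by omega))).2 (Or.inl h)

theorem isEdge_of_isChord (hn : 8 ≤ n) {x y : Fin (n + 2)} (h : IsChord u x y) :
    IsEdge (fanTriangulation hn u) x y := by
  have hxy : x < y := Fin.lt_def.2 (by obtain ⟨k, -, hx, hy⟩ := h; omega)
  exact (isEdge_fanTriangulation_iff hn hxy).2 (Or.inr (Or.inr (Or.inr h)))

theorem not_isEdge_chord_of_eq_false (hn : 8 ≤ n) {k : Fin 4} (hk : u k = false)
    {x y : Fin (n + 2)} (hx : x.val = 2 * k + 1) (hy : y.val = 2 * k + 3) :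
    ¬ IsEdge (fanTriangulation hn u) x y := by
  have := k.isLt
  rw [isEdge_fanTriangulation_iff hn (Fin.lt_def.2 (by omega)), hx, hy, isFanDiag_chord_iff, hk]
  simp only [Bool.false_eq_true, or_false]
  omega

theorem fanColour_update (hn : 8 ≤ n) {k : Fin 4} (hk : u k = false) {t : Finset (Fin (n + 2))}
    (ht : IsTriangle (fanTriangulation hn u) t) :
    fanColour (Function.update u k true) t = fanColour u t := by
  -- the only new chord, `{2k+1, 2k+3}`, is not an edge of `T u`, so lies in no triangle of it
  unfold fanColour
  congr 1
  refine propext ⟨?_, ?_⟩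
  · rintro ⟨x, hx, y, hy, hxy⟩
    rcases isChord_update.1 hxy with hc | ⟨hxk, hyk⟩
    · exact ⟨x, hx, y, hy, hc⟩
    · exact absurd (ht.isEdge hx hy (fun h => by rw [h] at hxk; omega))
        (not_isEdge_chord_of_eq_false hn hk hxk hyk)
  · rintro ⟨x, hx, y, hy, hxy⟩
    exact ⟨x, hx, y, hy, isChord_update.2 (Or.inl hxy)⟩

theorem fanDiags_update {k : Fin 4} {a b c : Fin (n + 2)} (ha : a.val = 2 * k + 1)
    (hb : b.val = 2 * k + 2) (hc : c.val = 2 * k + 3) :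
    fanDiags n (Function.update u k true) = insert {a, c} ((fanDiags n u).erase {0, b}) := by
  have hac : a < c := Fin.lt_def.2 (by omega)
  have hb0 : (0 : Fin (n + 2)) < b := Fin.lt_def.2 (by rw [Fin.val_zero]; omega)
  ext d
  simp only [Finset.mem_insert, Finset.mem_erase, mem_fanDiags]
  constructor
  · rintro ⟨p, q, hpq, rfl, h⟩
    rcases isFanDiag_update.1 h with ⟨hp, hq⟩ | ⟨hne, h⟩
    · left
      rw [show p = a from Fin.ext (by omega), show q = c from Fin.ext (by omega)]
    · refine Or.inr ⟨fun heq => hne ?_, p, q, hpq, rfl, h⟩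
      obtain ⟨rfl, rfl⟩ := pair_eq_pair_of_lt hpq hb0 heq
      exact ⟨rfl, hb⟩
  · rintro (rfl | ⟨hne, p, q, hpq, rfl, h⟩)
    · exact ⟨a, c, hac, rfl, isFanDiag_update.2 (Or.inl ⟨ha, hc⟩)⟩
    · refine ⟨p, q, hpq, rfl, isFanDiag_update.2 (Or.inr ⟨fun h0 => hne ?_, h⟩)⟩
      rw [show p = 0 from Fin.ext (by simp [h0.1]), show q = b from Fin.ext (by omega)]

theorem fanColour_of_isChord {t : Finset (Fin (n + 2))} {x y : Fin (n + 2)} (h : IsChord u x y)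
    (hx : x ∈ t) (hy : y ∈ t) : fanColour u t = 1 :=
  if_pos ⟨x, hx, y, hy, h⟩

theorem fanColour_zero_even {b : Fin (n + 2)} (hb : b.val % 2 = 0) (x : Fin (n + 2)) :
    fanColour u {0, b, x} = 0 := by
  refine if_neg ?_
  rintro ⟨y, hy, z, hz, l, -, hyl, hzl⟩
  have hodd : ∀ w ∈ ({0, b, x} : Finset (Fin (n + 2))), w.val % 2 = 1 → w = x := by
    simp only [Finset.mem_insert, Finset.mem_singleton]
    rintro w (rfl | rfl | rfl) hw
    · simp at hw
    · omega
    · rfl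
  obtain rfl := hodd y hy (by omega)
  obtain rfl := hodd z hz (by omega)
  omega

theorem flip2_flippedFan_update (hn : 8 ≤ n) {k : Fin 4} (hk : u k = false) :
    Flip2 (flippedFan hn u) (flippedFan hn (Function.update u k true)) := by
  have := k.isLt
  set v := Function.update u k true
  obtain ⟨a, ha⟩ : ∃ a : Fin (n + 2), a.val = 2 * k + 1 := ⟨⟨_, by omega⟩, rfl⟩
  obtain ⟨b, hb⟩ : ∃ b : Fin (n + 2), b.val = 2 * k + 2 := ⟨⟨_, by omega⟩, rfl⟩
  obtain ⟨c, hc⟩ : ∃ c : Fin (n + 2), c.val = 2 * k + 3 := ⟨⟨_, by omega⟩, rfl⟩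
  have hchord : IsChord v a c := ⟨k, by simp [v], ha, hc⟩
  have hspoke : ¬ RemovedSpoke u b := by
    rintro ⟨l, hl, hbl⟩
    obtain rfl : k = l := Fin.ext (by omega)
    simp [hl] at hk
  have h0b : IsEdge (fanTriangulation hn u) 0 b :=
    isEdge_zero_of_not_removedSpoke hn (by omega) hspoke
  have h0x : ∀ {w : Fin 4 → Bool} {x : Fin (n + 2)},
      (x.val = 2 * k + 1 ∨ x.val = 2 * k + 3) → IsEdge (fanTriangulation hn w) 0 x :=
    fun hx => isEdge_zero_of_not_removedSpoke hn (by omega) (not_removedSpoke_of_odd (by omega))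
  have hab : ∀ {w}, IsEdge (fanTriangulation hn w) a b := isEdge_of_val_eq_succ hn (by omega)
  have hbc : ∀ {w}, IsEdge (fanTriangulation hn w) b c := isEdge_of_val_eq_succ hn (by omega)
  have h₁ : IsTriangle (fanTriangulation hn u) {0, b, a} :=
    isTriangle_of_isEdge h0b (h0x (.inl ha)) hab.symm
  have h₂ : IsTriangle (fanTriangulation hn u) {0, b, c} :=
    isTriangle_of_isEdge h0b (h0x (.inr hc)) hbc
  have h₁' : IsTriangle (fanTriangulation hn v) {0, a, c} :=
    isTriangle_of_isEdge (h0x (.inl ha)) (h0x (.inr hc)) (isEdge_of_isChord hn hchord)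
  have h₂' : IsTriangle (fanTriangulation hn v) {b, a, c} :=
    isTriangle_of_isEdge hab.symm hbc (isEdge_of_isChord hn hchord)
  have hd : {0, b} ∈ fanDiags n u :=
    (pair_mem_fanDiags (Fin.lt_def.2 (by rw [Fin.val_zero]; omega))).2
      (Or.inl ⟨rfl, by omega, by omega, hspoke⟩)
  have hold : ∀ x, fanColour u {0, b, x} = 0 := fanColour_zero_even (by omega)
  refine ⟨{0, b}, 0, b, a, c, h₁, h₂, h₁', h₂', rfl, hd, fun h => by rw [h] at ha; omega,
    (hold a).trans (hold c).symm, fanDiags_update ha hb hc, ?_, ?_,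
    fun t ht _ _ _ => fanColour_update hn hk ht⟩
  all_goals
    show fanColour v _ = finRotate 2 (fanColour u _)
    rw [fanColour_of_isChord hchord (by simp) (by simp), hold]
    rfl

theorem flippedFan_injective (hn : 8 ≤ n) : Function.Injective (flippedFan (n := n) hn) := by
  intro u v h
  have hd : fanDiags n u = fanDiags n v := congrArg (fun C => C.T.diags) h
  funext k
  have := k.isLt
  have hlt : (⟨2 * k + 1, by omega⟩ : Fin (n + 2)) < ⟨2 * k + 3, by omega⟩ :=
    Fin.mk_lt_mk.2 (by omega)
  refine Bool.eq_iff_iff.2 ?_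
  rw [← isFanDiag_chord_iff (n := n), ← isFanDiag_chord_iff (n := n), ← pair_mem_fanDiags hlt,
    ← pair_mem_fanDiags hlt, hd]

theorem flipGraph_adj_flippedFan_update (hn : 8 ≤ n) {k : Fin 4} (hk : u k = false) :
    (flipGraph (n + 2)).Adj (flippedFan hn u) (flippedFan hn (Function.update u k true)) := by
  refine ⟨(flippedFan_injective hn).ne fun h => ?_, Or.inl (flip2_flippedFan_update hn hk)⟩
  simpa [hk] using congrFun h k

noncomputable def flippedFanHom (hn : 8 ≤ n) : cubeGraph 4 →g flipGraph (n + 2) where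
  toFun := flippedFan hn
  map_rel' h := by
    obtain ⟨i, ⟨hu, rfl⟩ | ⟨hv, rfl⟩⟩ := exists_update_of_cubeGraph_adj h
    exacts [flipGraph_adj_flippedFan_update hn hu, (flipGraph_adj_flippedFan_update hn hv).symm]

end Flip

section Subdivision

open SimpleGraph

variable {V V' W α β : Type*} {G : SimpleGraph V}

theorem ContainsSubdivision.map {G' : SimpleGraph V'} {H : SimpleGraph W} (φ : G →g G')
    (hφ : Function.Injective φ) (h : ContainsSubdivision G H) : ContainsSubdivision G' H := by
  obtain ⟨f, hf, P, hpath, hbranch, hdisj⟩ := h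
  refine ⟨φ ∘ f, hφ.comp hf, fun u v h => (P u v h).map φ,
    fun u v h => (hpath u v h).map hφ, fun u v h w hw => ?_,
    fun u₁ v₁ h₁ u₂ v₂ h₂ hne x hx₁ hx₂ => ?_⟩
  · obtain ⟨z, hz, hzw⟩ := List.mem_map.1 ((P u v h).support_map φ ▸ hw)
    exact hbranch u v h w (hφ hzw ▸ hz)
  · obtain ⟨z, hz₁, rfl⟩ := List.mem_map.1 ((P u₁ v₁ h₁).support_map φ ▸ hx₁)
    obtain ⟨z', hz₂, hzz⟩ := List.mem_map.1 ((P u₂ v₂ h₂).support_map φ ▸ hx₂)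
    obtain rfl : z = z' := hφ hzz.symm
    simpa only [Function.comp_apply, hφ.eq_iff] using
      hdisj u₁ v₁ h₁ u₂ v₂ h₂ hne z hz₁ hz₂

def bipartiteWalk (a : α → V) (b : β → V) (W : ∀ i j, G.Walk (a i) (b j)) :
    ∀ u v, (completeBipartiteGraph α β).Adj u v → G.Walk (Sum.elim a b u) (Sum.elim a b v)
  | .inl i, .inr j, _ => W i j
  | .inr j, .inl i, _ => (W i j).reverse
  | .inl _, .inl _, h => absurd h (by simp)
  | .inr _, .inr _, h => absurd h (by simp)

theorem exists_support_perm_bipartiteWalk (a : α → V) (b : β → V)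
    (W : ∀ i j, G.Walk (a i) (b j)) : ∀ u v h, ∃ i j, s(u, v) = s(.inl i, .inr j) ∧
      (bipartiteWalk a b W u v h).support.Perm (W i j).support
  | .inl i, .inr j, _ => ⟨i, j, rfl, .refl _⟩
  | .inr j, .inl i, _ => ⟨i, j, Sym2.eq_swap, by simp [bipartiteWalk, List.reverse_perm]⟩
  | .inl _, .inl _, h => absurd h (by simp)
  | .inr _, .inr _, h => absurd h (by simp)

theorem containsSubdivision_completeBipartiteGraph (a : α → V) (b : β → V)
    (hinj : Function.Injective (Sum.elim a b)) (W : ∀ i j, G.Walk (a i) (b j))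
    (hpath : ∀ i j, (W i j).IsPath)
    (hbranch : ∀ i j w, Sum.elim a b w ∈ (W i j).support → w = .inl i ∨ w = .inr j)
    (hdisj : ∀ i j i' j', ∀ x ∈ (W i j).support, x ∈ (W i' j').support →
      (i, j) ≠ (i', j') → (x = a i ∨ x = b j) ∧ (x = a i' ∨ x = b j')) :
    ContainsSubdivision G (completeBipartiteGraph α β) := by
  have hends : ∀ {u v p q : α ⊕ β} {x : V}, s(u, v) = s(p, q) →
      x = Sum.elim a b p ∨ x = Sum.elim a b q → x = Sum.elim a b u ∨ x = Sum.elim a b v := by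
    intro u v p q x h hx
    rcases Sym2.eq_iff.1 h with ⟨rfl, rfl⟩ | ⟨rfl, rfl⟩
    exacts [hx, hx.symm]
  refine ⟨Sum.elim a b, hinj, bipartiteWalk a b W, fun u v h => ?_, fun u v h w hw => ?_,
    fun u₁ v₁ h₁ u₂ v₂ h₂ hne x hx₁ hx₂ => ?_⟩
  · obtain ⟨i, j, -, hperm⟩ := exists_support_perm_bipartiteWalk a b W u v h
    rw [Walk.isPath_def, hperm.nodup_iff, ← Walk.isPath_def]
    exact hpath i j
  · obtain ⟨i, j, hs, hperm⟩ := exists_support_perm_bipartiteWalk a b W u v h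
    rw [← Sym2.mem_iff, hs, Sym2.mem_iff]
    exact hbranch i j w (hperm.mem_iff.1 hw)
  · obtain ⟨i₁, j₁, hs₁, hperm₁⟩ := exists_support_perm_bipartiteWalk a b W _ _ h₁
    obtain ⟨i₂, j₂, hs₂, hperm₂⟩ := exists_support_perm_bipartiteWalk a b W _ _ h₂
    have hne' : (i₁, j₁) ≠ (i₂, j₂) := by
      rintro ⟨⟩
      exact hne (hs₁.trans hs₂.symm)
    obtain ⟨h₁', h₂'⟩ :=
      hdisj i₁ j₁ i₂ j₂ x (hperm₁.mem_iff.1 hx₁) (hperm₂.mem_iff.1 hx₂) hne'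
    exact ⟨hends hs₁ h₁', hends hs₂ h₂'⟩

end Subdivision

section K33

open SimpleGraph

def cubeVertex (m : ℕ) : Fin 4 → Bool := fun i => m.testBit i

def k33Left : Fin 3 → Fin 4 → Bool := ![cubeVertex 0, cubeVertex 1, cubeVertex 6]

def k33Right : Fin 3 → Fin 4 → Bool := ![cubeVertex 2, cubeVertex 4, cubeVertex 8]

def k33Walk : ∀ i j, (cubeGraph 4).Walk (k33Left i) (k33Right j)
  | 0, 0 => .cons (by decide) .nil
  | 0, 1 => .cons (by decide) .nil
  | 0, 2 => .cons (by decide) .nil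
  | 1, 0 => .cons (v := cubeVertex 3) (by decide) (.cons (by decide) .nil)
  | 1, 1 => .cons (v := cubeVertex 5) (by decide) (.cons (by decide) .nil)
  | 1, 2 => .cons (v := cubeVertex 9) (by decide) (.cons (by decide) .nil)
  | 2, 0 => .cons (by decide) .nil
  | 2, 1 => .cons (by decide) .nil
  | 2, 2 =>
    .cons (v := cubeVertex 14) (by decide)
      (.cons (v := cubeVertex 10) (by decide) (.cons (by decide) .nil))

theorem cubeGraph_four_containsSubdivision_K33 :
    ContainsSubdivision (cubeGraph 4) (completeBipartiteGraph (Fin 3) (Fin 3)) :=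
  containsSubdivision_completeBipartiteGraph k33Left k33Right (by decide) k33Walk
    (fun i j => Walk.isPath_def _ |>.2 (by revert i j; decide)) (by decide) (by decide)

end K33

/-- For `n ≥ 8`, the 2-coloured flip graph of a convex `(n+2)`-gon has a connected
component which is not planar. -/
theorem nonplanar_component (n : ℕ) (hn : 8 ≤ n) :
    ∃ C : ColouredTri (n + 2) 2,
      ¬ IsPlanar ((flipGraph (n + 2)).induce
          {C' : ColouredTri (n + 2) 2 | (flipGraph (n + 2)).Reachable C C'}) := by
  set φ := flippedFanHom hn
  refine ⟨φ fun _ => false, fun hplanar => hplanar.2 ?_⟩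
  let ψ : cubeGraph 4 →g
      (flipGraph (n + 2)).induce {C' | (flipGraph (n + 2)).Reachable (φ fun _ => false) C'} :=
    ⟨fun u => ⟨φ u, (cubeGraph_preconnected 4 _ u).map φ⟩, φ.map_adj⟩
  exact cubeGraph_four_containsSubdivision_K33.map ψ
    fun u v h => flippedFan_injective hn (congrArg Subtype.val h)

end PolyFlip
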